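/- arXiv:2303.06487 — 7 statements merged into one kernel-verified Lean document; each statement's English description precedes it below -/
import Mathlib

section
/- For a zero-dimensional topological space X (one with a base of clopen sets), X satisfies S₁(C_O, C_O) if and only if X satisfies S₁(O, O). -/
open Set

section Defs

variable (X : Type*) [TopologicalSpace X]

/-- A clopen cover of `X`. -/
def IsClopenCover (U : Set (Set X)) : Prop :=
  (∀ V ∈ U, IsClopen V) ∧ ⋃₀ U = (univ : Set X)

/-- An open cover of `X`. -/
def IsOpenCover (U : Set (Set X)) : Prop :=
  (∀ V ∈ U, IsOpen V) ∧ ⋃₀ U = (univ : Set X)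

/-- The selection principle `S₁(C_O, C_O)` (mildly Rothberger). -/
def S1CC : Prop :=
  ∀ U : ℕ → Set (Set X), (∀ n, IsClopenCover X (U n)) →
    ∃ V : ℕ → Set X, (∀ n, V n ∈ U n) ∧ (⋃ n, V n) = (univ : Set X)

/-- The Rothberger selection principle `S₁(O, O)`. -/
def S1OO : Prop :=
  ∀ U : ℕ → Set (Set X), (∀ n, IsOpenCover X (U n)) →
    ∃ V : ℕ → Set X, (∀ n, V n ∈ U n) ∧ (⋃ n, V n) = (univ : Set X)

end Defs

/-- History of the first `n` moves of a play `b`. -/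
def hist {α : Type*} (b : ℕ → α) (n : ℕ) : List α := List.ofFn (fun i : Fin n => b i)

section Games

variable (X : Type*) [TopologicalSpace X]

/-- Alice has a winning strategy in `G₁(C_O, C_O)`. -/
def AliceWinsG1CC : Prop :=
  ∃ σ : List (Set X) → Set (Set X),
    (∀ h, IsClopenCover X (σ h)) ∧
    ∀ b : ℕ → Set X, (∀ n, b n ∈ σ (hist b n)) → (⋃ n, b n) ≠ (univ : Set X)

/-- Bob has a winning strategy in `G₁(C_O, C_O)`. -/
def BobWinsG1CC : Prop :=
  ∃ τ : List (Set (Set X)) → Set X,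
    ∀ U : ℕ → Set (Set X), (∀ n, IsClopenCover X (U n)) →
      (∀ n, τ (hist U (n+1)) ∈ U n) ∧ (⋃ n, τ (hist U (n+1))) = (univ : Set X)

/-- Alice has a winning strategy in the Rothberger game `G₁(O, O)`. -/
def AliceWinsG1OO : Prop :=
  ∃ σ : List (Set X) → Set (Set X),
    (∀ h, IsOpenCover X (σ h)) ∧
    ∀ b : ℕ → Set X, (∀ n, b n ∈ σ (hist b n)) → (⋃ n, b n) ≠ (univ : Set X)

/-- Bob has a winning strategy in the Rothberger game `G₁(O, O)`. -/
def BobWinsG1OO : Prop :=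
  ∃ τ : List (Set (Set X)) → Set X,
    ∀ U : ℕ → Set (Set X), (∀ n, IsOpenCover X (U n)) →
      (∀ n, τ (hist U (n+1)) ∈ U n) ∧ (⋃ n, τ (hist U (n+1))) = (univ : Set X)

/-- The quasi-component of a point: the intersection of all clopen sets containing it. -/
def quasiComponent (x : X) : Set X := ⋂₀ {U : Set X | IsClopen U ∧ x ∈ U}

/-- Alice has a winning strategy in the point-clopen game `PC(X)`. -/
def AliceWinsPC : Prop :=
  ∃ φ : List (Set X) → X,
    ∀ b : ℕ → Set X, (∀ n, IsClopen (b n) ∧ φ (hist b n) ∈ b n) →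
      (⋃ n, b n) = (univ : Set X)

/-- Bob has a winning strategy in the point-clopen game `PC(X)`. -/
def BobWinsPC : Prop :=
  ∃ ψ : List X → Set X,
    ∀ x : ℕ → X,
      (∀ n, IsClopen (ψ (hist x (n+1))) ∧ x n ∈ ψ (hist x (n+1))) ∧
      (⋃ n, ψ (hist x (n+1))) ≠ (univ : Set X)

/-- Alice has a winning strategy in the point-open game `PO(X)`. -/
def AliceWinsPO : Prop :=
  ∃ φ : List (Set X) → X,
    ∀ b : ℕ → Set X, (∀ n, IsOpen (b n) ∧ φ (hist b n) ∈ b n) →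
      (⋃ n, b n) = (univ : Set X)

/-- Bob has a winning strategy in the point-open game `PO(X)`. -/
def BobWinsPO : Prop :=
  ∃ ψ : List X → Set X,
    ∀ x : ℕ → X,
      (∀ n, IsOpen (ψ (hist x (n+1))) ∧ x n ∈ ψ (hist x (n+1))) ∧
      (⋃ n, ψ (hist x (n+1))) ≠ (univ : Set X)

/-- Alice has a winning strategy in the quasi-component-clopen game `QC(X)`. -/
def AliceWinsQC : Prop :=
  ∃ φ : List (Set X) → Set X,
    (∀ h, ∃ x : X, φ h = quasiComponent X x) ∧
    ∀ b : ℕ → Set X, (∀ n, IsClopen (b n) ∧ φ (hist b n) ⊆ b n) →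
      (⋃ n, b n) = (univ : Set X)

/-- Bob has a winning strategy in the quasi-component-clopen game `QC(X)`. -/
def BobWinsQC : Prop :=
  ∃ ψ : List (Set X) → Set X,
    ∀ A : ℕ → Set X, (∀ n, ∃ x : X, A n = quasiComponent X x) →
      (∀ n, IsClopen (ψ (hist A (n+1))) ∧ A n ⊆ ψ (hist A (n+1))) ∧
      (⋃ n, ψ (hist A (n+1))) ≠ (univ : Set X)

end Games

/-- For a zero-dimensional space, `S₁(C_O, C_O)` is equivalent to `S₁(O, O)`. -/
theorem stmt3 (X : Type*) [TopologicalSpace X]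
    (hzd : ∀ (x : X) (U : Set X), IsOpen U → x ∈ U →
      ∃ V : Set X, IsClopen V ∧ x ∈ V ∧ V ⊆ U) :
    S1CC X ↔ S1OO X := by
  constructor
  · intro h U hU
    set W : ℕ → Set (Set X) := fun n => {V | IsClopen V ∧ ∃ O ∈ U n, V ⊆ O} with hW
    have hWc : ∀ n, IsClopenCover X (W n) := by
      intro n
      refine ⟨fun V hV => hV.1, ?_⟩
      apply eq_univ_of_forall
      intro x
      have hx : x ∈ ⋃₀ U n := by rw [(hU n).2]; trivial
      obtain ⟨O, hO, hxO⟩ := hx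
      obtain ⟨V, hVc, hxV, hVO⟩ := hzd x O ((hU n).1 O hO) hxO
      exact ⟨V, ⟨hVc, O, hO, hVO⟩, hxV⟩
    obtain ⟨V, hVm, hVu⟩ := h W hWc
    choose O hOm hVO using fun n => (hVm n).2
    refine ⟨O, hOm, ?_⟩
    apply eq_univ_of_forall
    intro x
    have hx : x ∈ ⋃ n, V n := by rw [hVu]; trivial
    obtain ⟨_, ⟨n, rfl⟩, hxn⟩ := hx
    exact mem_iUnion.2 ⟨n, hVO n hxn⟩
  · intro h U hU
    exact h U fun n => ⟨fun V hV => ((hU n).1 V hV).2, (hU n).2⟩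
end

section
/- If a topological space X is a union of countably many quasi-components, then Bob has a winning strategy in the game G₁(C_O, C_O) on X: Bob can select one clopen set from each clopen cover Alice plays so that his selections cover X. -/
open Set

/-- If `X` is a union of countably many quasi-components, then Bob has a winning
strategy in `G₁(C_O, C_O)`. -/
theorem stmt4 (X : Type*) [TopologicalSpace X]
    (h : ∃ f : ℕ → X, (⋃ n, quasiComponent X (f n)) = (Set.univ : Set X)) :
    BobWinsG1CC X := by
  classical
  obtain ⟨f, hf⟩ := h
  refine ⟨fun l => Classical.epsilon fun V =>
      V ∈ l.getD (l.length - 1) ∅ ∧ f (l.length - 1) ∈ V, ?_⟩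
  intro U hU
  have hlen : ∀ n : ℕ, (hist U (n+1)).length - 1 = n := by
    intro n; simp [hist]
  have hget : ∀ n : ℕ, (hist U (n+1)).getD ((hist U (n+1)).length - 1) ∅ = U n := by
    intro n
    rw [hlen n, List.getD_eq_getElem _ _ (by simp [hist])]
    simp only [hist]
    rw [List.getElem_ofFn]
  have hτ : ∀ n : ℕ, (fun l => Classical.epsilon fun V =>
      V ∈ l.getD (l.length - 1) ∅ ∧ f (l.length - 1) ∈ V) (hist U (n+1)) =
      Classical.epsilon fun V => V ∈ U n ∧ f n ∈ V := by
    intro n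
    show Classical.epsilon _ = _
    congr 1
    funext V
    rw [hget n, hlen n]
  have hsel : ∀ n : ℕ, (Classical.epsilon fun V => V ∈ U n ∧ f n ∈ V) ∈ U n ∧
      f n ∈ (Classical.epsilon fun V => V ∈ U n ∧ f n ∈ V) := by
    intro n
    have : f n ∈ ⋃₀ U n := by rw [(hU n).2]; trivial
    obtain ⟨V, hV, hfV⟩ := this
    exact Classical.epsilon_spec (p := fun V => V ∈ U n ∧ f n ∈ V) ⟨V, hV, hfV⟩
  constructor
  · intro n; rw [hτ n]; exact (hsel n).1
  · apply eq_univ_of_univ_subset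
    rw [← hf]
    refine iUnion_subset fun n => subset_iUnion_of_subset n ?_
    intro y hy
    rw [hτ n]
    have hclopen : IsClopen _ := (hU n).1 _ (hsel n).1
    exact hy _ ⟨hclopen, (hsel n).2⟩
end

section
/- If a topological space X is a union of countably many quasi-components, then X satisfies S₁(C_O, C_O). -/
open Set

/-- If `X` is a union of countably many quasi-components, then `X` satisfies
`S₁(C_O, C_O)`. -/
theorem stmt5 (X : Type*) [TopologicalSpace X]
    (h : ∃ f : ℕ → X, (⋃ n, quasiComponent X (f n)) = (Set.univ : Set X)) :
    S1CC X := by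
  obtain ⟨f, hf⟩ := h
  intro U hU
  have hsel : ∀ n, ∃ V, V ∈ U n ∧ f n ∈ V := by
    intro n
    have : f n ∈ ⋃₀ U n := by rw [(hU n).2]; trivial
    simpa [Set.mem_sUnion] using this
  choose V hVmem hVf using hsel
  refine ⟨V, hVmem, ?_⟩
  apply Set.eq_univ_of_univ_subset
  rw [← hf]
  refine Set.iUnion_subset fun n => ?_
  refine Set.subset_iUnion_of_subset n ?_
  intro y hy
  exact hy (V n) ⟨(hU n).1 _ (hVmem n), hVf n⟩
end

section
/- For a zero-dimensional space X, the game G₁(C_O, C_O) is equivalent to the Rothberger game G₁(O, O): Alice (resp. Bob) has a winning strategy in G₁(C_O, C_O) iff Alice (resp. Bob) has a winning strategy in G₁(O, O). -/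
open Set

section Aux

variable {X : Type*} [TopologicalSpace X]

/-- Clopen refinement of a cover. -/
def RRef (U : Set (Set X)) : Set (Set X) := {V | IsClopen V ∧ ∃ W ∈ U, V ⊆ W}

lemma RRef_clopenCover
    (hzd : ∀ (x : X) (U : Set X), IsOpen U → x ∈ U →
      ∃ V : Set X, IsClopen V ∧ x ∈ V ∧ V ⊆ U)
    {U : Set (Set X)} (hU : IsOpenCover X U) : IsClopenCover X (RRef U) := by
  refine ⟨fun V hV => hV.1, ?_⟩
  rw [eq_univ_iff_forall]
  intro x
  have hx : x ∈ ⋃₀ U := by rw [hU.2]; exact mem_univ x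
  obtain ⟨W, hW, hxW⟩ := hx
  obtain ⟨V, hV, hxV, hVW⟩ := hzd x W (hU.1 W hW) hxW
  exact ⟨V, ⟨hV, W, hW, hVW⟩, hxV⟩

/-- Pick a member of `U` containing `V`, if one exists. -/
noncomputable def pick (U : Set (Set X)) (V : Set X) : Set X :=
  Classical.epsilon (fun W => W ∈ U ∧ V ⊆ W)

lemma pick_spec {U : Set (Set X)} {V : Set X} (h : ∃ W ∈ U, V ⊆ W) :
    pick U V ∈ U ∧ V ⊆ pick U V := by
  obtain ⟨W, h1, h2⟩ := h
  exact Classical.epsilon_spec (p := fun W => W ∈ U ∧ V ⊆ W) ⟨W, h1, h2⟩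

lemma hist_zero {α : Type*} (b : ℕ → α) : hist b 0 = [] := rfl

lemma hist_succ {α : Type*} (b : ℕ → α) (n : ℕ) :
    hist b (n + 1) = hist b n ++ [b n] := by
  show List.ofFn (fun i : Fin (n + 1) => b i) = _
  rw [List.ofFn_succ']
  simp [hist, List.concat_eq_append]

lemma hist_map {α β : Type*} (f : α → β) (b : ℕ → α) (n : ℕ) :
    (hist b n).map f = hist (fun i => f (b i)) n := by
  simp [hist, List.map_ofFn, Function.comp_def]

/-- Translate a clopen-game history to an open-game history. -/
noncomputable def Tgo (σ : List (Set X) → Set (Set X)) :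
    List (Set X) → List (Set X) → List (Set X)
  | acc, [] => acc
  | acc, V :: rest => Tgo σ (acc ++ [pick (σ acc) V]) rest

lemma Tgo_append (σ : List (Set X) → Set (Set X)) (V : Set X) :
    ∀ (h acc : List (Set X)),
      Tgo σ acc (h ++ [V]) = Tgo σ acc h ++ [pick (σ (Tgo σ acc h)) V]
  | [], acc => rfl
  | W :: rest, acc => by
      simp only [List.cons_append, Tgo]
      exact Tgo_append σ V rest _

end Aux

/-- For a zero-dimensional space, `G₁(C_O, C_O)` is equivalent to `G₁(O, O)`. -/
theorem stmt10 (X : Type*) [TopologicalSpace X]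
    (hzd : ∀ (x : X) (U : Set X), IsOpen U → x ∈ U →
      ∃ V : Set X, IsClopen V ∧ x ∈ V ∧ V ⊆ U) :
    (AliceWinsG1CC X ↔ AliceWinsG1OO X) ∧ (BobWinsG1CC X ↔ BobWinsG1OO X) := by
  have clopen_to_open : ∀ U : Set (Set X), IsClopenCover X U → IsOpenCover X U :=
    fun U hU => ⟨fun V hV => (hU.1 V hV).isOpen, hU.2⟩
  constructor
  · constructor
    · -- AliceWinsG1CC → AliceWinsG1OO
      rintro ⟨σ, hcov, hwin⟩
      exact ⟨σ, fun h => clopen_to_open _ (hcov h), hwin⟩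
    · -- AliceWinsG1OO → AliceWinsG1CC
      rintro ⟨σ, hcov, hwin⟩
      refine ⟨fun h => RRef (σ (Tgo σ [] h)),
        fun h => RRef_clopenCover hzd (hcov _), ?_⟩
      intro b hb
      obtain ⟨b', hb'⟩ : ∃ b' : ℕ → Set X,
          ∀ n, b' n = pick (σ (Tgo σ [] (hist b n))) (b n) := ⟨_, fun _ => rfl⟩
      have key : ∀ n, Tgo σ [] (hist b n) = hist b' n := by
        intro n
        induction n with
        | zero => rfl
        | succ n ih =>
            rw [hist_succ b, Tgo_append, hist_succ b', hb' n, ih]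
      have hspec : ∀ n, b' n ∈ σ (hist b' n) ∧ b n ⊆ b' n := by
        intro n
        have hex : ∃ W ∈ σ (Tgo σ [] (hist b n)), b n ⊆ W := (hb n).2
        rw [key n] at hex
        rw [hb' n, key n]
        exact pick_spec hex
      have hwin' := hwin b' (fun n => (hspec n).1)
      intro hcontra
      apply hwin'
      exact eq_univ_of_univ_subset (hcontra ▸ iUnion_mono (fun n => (hspec n).2))
  · constructor
    · -- BobWinsG1CC → BobWinsG1OO
      rintro ⟨τ, hτ⟩
      refine ⟨fun h => pick (h.getLastD ∅) (τ (h.map RRef)), ?_⟩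
      intro U hU
      set U' : ℕ → Set (Set X) := fun n => RRef (U n) with hU'def
      have hU' : ∀ n, IsClopenCover X (U' n) := fun n => RRef_clopenCover hzd (hU n)
      obtain ⟨hmem, hcover⟩ := hτ U' hU'
      have key : ∀ n, (hist U (n + 1)).map RRef = hist U' (n + 1) :=
        fun n => hist_map RRef U (n + 1)
      have keyLast : ∀ n, (hist U (n + 1)).getLastD ∅ = U n := by
        intro n
        rw [hist_succ]
        simp
      have hspec : ∀ n, pick ((hist U (n+1)).getLastD ∅) (τ ((hist U (n+1)).map RRef)) ∈ U n ∧
          τ (hist U' (n+1)) ⊆ pick ((hist U (n+1)).getLastD ∅) (τ ((hist U (n+1)).map RRef)) := by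
        intro n
        rw [key n, keyLast n]
        exact pick_spec (hmem n).2
      refine ⟨fun n => (hspec n).1, ?_⟩
      exact eq_univ_of_univ_subset (hcover ▸ iUnion_mono (fun n => (hspec n).2))
    · -- BobWinsG1OO → BobWinsG1CC
      rintro ⟨τ, hτ⟩
      exact ⟨τ, fun U hU => hτ U (fun n => clopen_to_open _ (hU n))⟩
end

section
/- If Alice has a winning strategy in the quasi-component-clopen game on X, and every quasi-component of X is an intersection of countably many clopen sets, then X is a union of countably many quasi-components. -/
open Set

/-- Auxiliary: the Bob-move history determined by a (reversed) finite sequence of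
natural number choices, given a response function `g`. -/
def Hseq {X : Type*} (g : List (Set X) → ℕ → Set X) : List ℕ → List (Set X)
  | [] => []
  | k :: s => Hseq g s ++ [g (Hseq g s) k]

/-- If Alice has a winning strategy in the quasi-component-clopen game and every
quasi-component is an intersection of countably many clopen sets, then `X` is a
union of countably many quasi-components. -/
theorem stmt13 (X : Type*) [TopologicalSpace X] (hA : AliceWinsQC X)
    (hG : ∀ x : X, ∃ V : ℕ → Set X, (∀ n, IsClopen (V n)) ∧
      quasiComponent X x = ⋂ n, V n) :
    ∃ f : ℕ → X, (⋃ n, quasiComponent X (f n)) = (Set.univ : Set X) := by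
  obtain ⟨φ, hφ1, hφ2⟩ := hA
  choose x hx using hφ1
  choose V hVclopen hVeq using hG
  set g : List (Set X) → ℕ → Set X := fun h k => V (x h) k with hg
  refine ⟨fun n => x (Hseq g (Denumerable.ofNat (List ℕ) n)), ?_⟩
  rw [eq_univ_iff_forall]
  intro z
  by_contra hz
  simp only [mem_iUnion, not_exists] at hz
  have hz' : ∀ s : List ℕ, z ∉ quasiComponent X (x (Hseq g s)) := by
    intro s
    have h1 := hz (Encodable.encode s)
    rwa [Denumerable.ofNat_encode] at h1
  have hk : ∀ s : List ℕ, ∃ m, z ∉ g (Hseq g s) m := by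
    intro s
    have h1 := hz' s
    rw [hVeq] at h1
    simpa [mem_iInter, hg] using h1
  choose k hkz using hk
  let s : ℕ → List ℕ := fun n => Nat.rec [] (fun _ prev => k prev :: prev) n
  let b : ℕ → Set X := fun n => g (Hseq g (s n)) (k (s n))
  have hs : ∀ n, s (n + 1) = k (s n) :: s n := fun n => rfl
  have hhist : ∀ n, hist b n = Hseq g (s n) := by
    intro n
    induction n with
    | zero => rfl
    | succ n ih =>
      rw [hs n]
      show List.ofFn (fun i : Fin (n + 1) => b i) = Hseq g (k (s n) :: s n)
      rw [List.ofFn_succ']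
      show (List.ofFn fun i : Fin n => b i).concat (b n)
        = Hseq g (s n) ++ [g (Hseq g (s n)) (k (s n))]
      rw [List.concat_eq_append]
      exact congrArg₂ (· ++ ·) ih rfl
  have hwin := hφ2 b ?_
  · rw [eq_univ_iff_forall] at hwin
    obtain ⟨n, hn⟩ := mem_iUnion.mp (hwin z)
    exact hkz (s n) hn
  · intro n
    refine ⟨hVclopen _ _, ?_⟩
    rw [hhist n, hx, hVeq]
    exact iInter_subset _ (k (s n))
end

section
/- If X satisfies S₁(C_O, C_O), then Bob has no winning Markov strategy in the point-clopen game PC(X), where a Markov strategy for Bob assigns to each point x and round n a clopen neighborhood τ(x, n) of x. -/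
open Set

/-- If `X` satisfies `S₁(C_O, C_O)` then Bob has no winning Markov strategy in
the point-clopen game. -/
theorem stmt17 (X : Type*) [TopologicalSpace X] (h : S1CC X) :
    ¬ ∃ τ : X → ℕ → Set X,
        (∀ (x : X) (n : ℕ), IsClopen (τ x n) ∧ x ∈ τ x n) ∧
        ∀ x : ℕ → X, (⋃ n, τ (x n) n) ≠ (Set.univ : Set X) := by
  rintro ⟨τ, hτ, hwin⟩
  obtain ⟨V, hV, hVu⟩ := h (fun n => Set.range (fun x => τ x n)) (fun n => by
    constructor
    · rintro W ⟨x, rfl⟩; exact (hτ x n).1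
    · apply Set.eq_univ_of_forall
      intro x
      exact ⟨τ x n, ⟨x, rfl⟩, (hτ x n).2⟩)
  choose x hx using hV
  exact hwin x (by simpa only [hx] using hVu)
end

section
/- If Alice has a winning strategy in the point-clopen game PC(X), then Bob has a winning strategy in the game G₁(C_O, C_O) on X. -/
open Set

noncomputable section Aux18

open Classical in
/-- Pick a member of the cover `V` containing `x`, if one exists. -/
noncomputable def pick18 {X : Type*} [TopologicalSpace X]
    (V : Set (Set X)) (x : X) : Set X :=
  if h : ∃ W ∈ V, x ∈ W then h.choose else ∅

open Classical in
lemma pick18_spec {X : Type*} [TopologicalSpace X]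
    {V : Set (Set X)} (hV : IsClopenCover X V) (x : X) :
    pick18 V x ∈ V ∧ x ∈ pick18 V x := by
  have hx : x ∈ ⋃₀ V := by rw [hV.2]; trivial
  obtain ⟨W, hW, hxW⟩ := hx
  have h : ∃ W ∈ V, x ∈ W := ⟨W, hW, hxW⟩
  rw [pick18, dif_pos h]
  exact ⟨h.choose_spec.1, h.choose_spec.2⟩

/-- Simulated Bob moves in the point-clopen game, given a history of covers. -/
noncomputable def sim18 {X : Type*} [TopologicalSpace X]
    (φ : List (Set X) → X) : List (Set (Set X)) → List (Set X)
  | [] => []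
  | L@(_ :: _) =>
      (sim18 φ L.dropLast) ++ [pick18 (L.getLastD ∅) (φ (sim18 φ L.dropLast))]
  termination_by L => L.length
  decreasing_by all_goals simp_all [List.length_dropLast]

lemma sim18_nil {X : Type*} [TopologicalSpace X] (φ : List (Set X) → X) :
    sim18 φ [] = [] := by
  rw [sim18]

lemma sim18_concat {X : Type*} [TopologicalSpace X] (φ : List (Set X) → X)
    (L : List (Set (Set X))) (a : Set (Set X)) :
    sim18 φ (L ++ [a]) = sim18 φ L ++ [pick18 a (φ (sim18 φ L))] := by
  obtain ⟨x, L', hL⟩ := List.exists_cons_of_ne_nil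
    (show L ++ [a] ≠ [] by simp)
  rw [hL]
  rw [sim18]
  rw [← hL]
  simp only [List.dropLast_concat, List.getLastD_concat]

lemma hist_succ18 {α : Type*} (f : ℕ → α) (n : ℕ) :
    hist f (n + 1) = hist f n ++ [f n] := by
  rw [hist, List.ofFn_succ', List.concat_eq_append]; rfl

theorem stmt18' (X : Type*) [TopologicalSpace X] (h : AliceWinsPC X) :
    BobWinsG1CC X := by
  obtain ⟨φ, hφ⟩ := h
  refine ⟨fun L => (sim18 φ L).getLastD ∅, ?_⟩
  intro U hU
  set b : ℕ → Set X := fun n => pick18 (U n) (φ (sim18 φ (hist U n))) with hb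
  have hsim : ∀ n, sim18 φ (hist U n) = hist b n := by
    intro n
    induction n with
    | zero =>
      rw [show hist U 0 = [] from by simp [hist],
          show hist b 0 = [] from by simp [hist], sim18_nil]
    | succ n ih =>
      rw [hist_succ18, hist_succ18, sim18_concat, ih,
          show b n = pick18 (U n) (φ (sim18 φ (hist U n))) from rfl, ih]
  have hτ : ∀ n, (sim18 φ (hist U (n+1))).getLastD ∅ = b n := by
    intro n
    rw [hsim, hist_succ18]
    simp
  have hbgood : ∀ n, IsClopen (b n) ∧ φ (hist b n) ∈ b n := by
    intro n
    obtain ⟨hmem, hx⟩ := pick18_spec (hU n) (φ (sim18 φ (hist U n)))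
    rw [hsim n] at hx
    refine ⟨(hU n).1 _ hmem, ?_⟩
    show φ (hist b n) ∈ pick18 (U n) (φ (sim18 φ (hist U n)))
    rw [hsim n]
    exact hx
  have hcover := hφ b hbgood
  constructor
  · intro n
    show (sim18 φ (hist U (n+1))).getLastD ∅ ∈ U n
    rw [hτ]
    exact (pick18_spec (hU n) _).1
  · show (⋃ n, (sim18 φ (hist U (n+1))).getLastD ∅) = Set.univ
    rw [Set.iUnion_congr hτ]
    exact hcover

end Aux18

/-- If Alice has a winning strategy in the point-clopen game then Bob has a
winning strategy in `G₁(C_O, C_O)`. -/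
theorem stmt18 (X : Type*) [TopologicalSpace X] (h : AliceWinsPC X) :
    BobWinsG1CC X := stmt18' X h
end
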